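/- Let n ≥ 1. Let a, b : ℝ × ℝⁿ → ℂ be twice continuously differentiable, A = (A₁,…,Aₙ) : ℝ × ℝⁿ → ℝⁿ be continuously differentiable, q : ℝ × ℝⁿ → ℂ be continuous, and ψ : ℝⁿ → ℝ be twice continuously differentiable. Define the Euclidean magnetic Laplacian Δ_A u(t,x) = Σ_{j=1}^n ( ∂_{x_j} + i A_j(t,x) )( ∂_{x_j}u(t,x) + i A_j(t,x) u(t,x) ) (the outer ∂_{x_j} acting on the function x ↦ ∂_{x_j}u + iA_j u) and the operator P u = i ∂_t u + Δ_A u + q·u. Assume the eikonal equation Σ_{j=1}^n (∂_{x_j}ψ(x))² = 1 for all x ∈ ℝⁿ, and the transport equations 2i Σ_j ∂_{x_j}ψ·∂_{x_j}a + i(Σ_j ∂²_{x_j x_j}ψ)·a − 2(Σ_j A_j ∂_{x_j}ψ)·a = 0 and 2i Σ_j ∂_{x_j}ψ·∂_{x_j}b + i(Σ_j ∂²_{x_j x_j}ψ)·b − 2(Σ_j A_j ∂_{x_j}ψ)·b = −P a, at every (t,x). Then for every real λ ≠ 0 and every (t,x) ∈ ℝ × ℝⁿ, P( (s,y) ↦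 exp(iλ(ψ(y) − λ s))·( a(s,y) + b(s,y)/λ ) )(t,x) = exp(iλ(ψ(x) − λ t)) · P b (t,x) / λ. -/

import Mathlib

open scoped BigOperators

variable {n : ℕ}

/-- Partial derivative in the time variable of a function on `ℝ × ℝⁿ`. -/
noncomputable def pt (u : ℝ × (Fin n → ℝ) → ℂ) (p : ℝ × (Fin n → ℝ)) : ℂ :=
  fderiv ℝ u p (1, 0)

/-- Partial derivative in the `j`-th space variable of a `ℂ`-valued function on `ℝ × ℝⁿ`. -/
noncomputable def px (j : Fin n) (u : ℝ × (Fin n → ℝ) → ℂ) (p : ℝ × (Fin n → ℝ)) : ℂ :=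
  fderiv ℝ u p (0, Pi.single j 1)

/-- Partial derivative in the `j`-th variable of an `ℝ`-valued function on `ℝⁿ`. -/
noncomputable def pxs (j : Fin n) (ψ : (Fin n → ℝ) → ℝ) (x : Fin n → ℝ) : ℝ :=
  fderiv ℝ ψ x (Pi.single j 1)

/-- The Euclidean magnetic Laplacian
`Δ_A u = Σ_j (∂_{x_j} + i A_j)(∂_{x_j} u + i A_j u)`. -/
noncomputable def magLap (A : ℝ × (Fin n → ℝ) → Fin n → ℝ)
    (u : ℝ × (Fin n → ℝ) → ℂ) (p : ℝ × (Fin n → ℝ)) : ℂ :=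
  ∑ j : Fin n,
    (px j (fun r => px j u r + Complex.I * (A r j : ℂ) * u r) p
      + Complex.I * (A p j : ℂ) * (px j u p + Complex.I * (A p j : ℂ) * u p))

/-- The magnetic Schrödinger operator `P u = i ∂_t u + Δ_A u + q u`. -/
noncomputable def schrodingerOp (A : ℝ × (Fin n → ℝ) → Fin n → ℝ)
    (q : ℝ × (Fin n → ℝ) → ℂ) (u : ℝ × (Fin n → ℝ) → ℂ) (p : ℝ × (Fin n → ℝ)) : ℂ :=
  Complex.I * pt u p + magLap A u p + q p * u p

/-!
Each covariant derivative `∂_{x_j} + iA_j` commutes with the phase `E = e^{iλ(ψ−λt)}` up to the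
term `iλ ∂_jψ`, and `i∂_t E = λ² E`. Hence `P(E v) = E (P v + λ T v + λ² (1 − |∇ψ|²) v)` with `T`
the transport operator, and the eikonal equation removes the `λ²` term. For `v = a + b/λ`,
linearity and the transport equations `T a = 0`, `T b = −P a` leave `E · P b / λ`.
-/

section WKB

open Complex

section PartialDerivatives

variable {E : Type*} [NormedAddCommGroup E] [NormedSpace ℝ E] {u v : E → ℂ} {p : E}

lemma fderiv_add_const_mul_apply (hu : DifferentiableAt ℝ u p) (hv : DifferentiableAt ℝ v p)
    (c : ℂ) (w : E) :
    fderiv ℝ (fun r => u r + c * v r) p w = fderiv ℝ u p w + c * fderiv ℝ v p w := by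
  simp [fderiv_fun_add hu (hv.const_mul c), fderiv_const_mul hv]

lemma fderiv_mul_apply (hu : DifferentiableAt ℝ u p) (hv : DifferentiableAt ℝ v p) (w : E) :
    fderiv ℝ (fun r => u r * v r) p w = fderiv ℝ u p w * v p + u p * fderiv ℝ v p w := by
  simp [fderiv_fun_mul hu hv]
  ring

end PartialDerivatives

variable {u v : ℝ × (Fin n → ℝ) → ℂ} {p : ℝ × (Fin n → ℝ)} {j : Fin n}

lemma pt_add_const_mul (hu : DifferentiableAt ℝ u p) (hv : DifferentiableAt ℝ v p) (c : ℂ) :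
    pt (fun r => u r + c * v r) p = pt u p + c * pt v p :=
  fderiv_add_const_mul_apply hu hv c _

lemma px_add_const_mul (hu : DifferentiableAt ℝ u p) (hv : DifferentiableAt ℝ v p) (c : ℂ) :
    px j (fun r => u r + c * v r) p = px j u p + c * px j v p :=
  fderiv_add_const_mul_apply hu hv c _

lemma pt_mul (hu : DifferentiableAt ℝ u p) (hv : DifferentiableAt ℝ v p) :
    pt (fun r => u r * v r) p = pt u p * v p + u p * pt v p :=
  fderiv_mul_apply hu hv _

lemma px_mul (hu : DifferentiableAt ℝ u p) (hv : DifferentiableAt ℝ v p) :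
    px j (fun r => u r * v r) p = px j u p * v p + u p * px j v p :=
  fderiv_mul_apply hu hv _

lemma px_ofReal_comp_snd {f : (Fin n → ℝ) → ℝ} (hf : DifferentiableAt ℝ f p.2) :
    px j (fun r => (f r.2 : ℂ)) p = pxs j f p.2 := by
  have h : HasFDerivAt (fun r => (f r.2 : ℂ)) _ p :=
    ofRealCLM.hasFDerivAt.comp p (hf.hasFDerivAt.comp p hasFDerivAt_snd)
  rw [px, h.fderiv]
  rfl

lemma ContDiff.px {m k : WithTop ℕ∞} (hu : ContDiff ℝ k u) (hmk : m + 1 ≤ k) :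
    ContDiff ℝ m (px j u) :=
  (hu.fderiv_right hmk).clm_apply contDiff_const

lemma ContDiff.pxs {m k : WithTop ℕ∞} {f : (Fin n → ℝ) → ℝ} (hf : ContDiff ℝ k f)
    (hmk : m + 1 ≤ k) : ContDiff ℝ m (pxs j f) :=
  (hf.fderiv_right hmk).clm_apply contDiff_const

noncomputable def wkbPhase (ψ : (Fin n → ℝ) → ℝ) (lam : ℝ) (r : ℝ × (Fin n → ℝ)) : ℂ :=
  exp (I * lam * (ψ r.2 - lam * r.1))

variable {ψ : (Fin n → ℝ) → ℝ} {lam : ℝ}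

lemma hasFDerivAt_wkbPhase (hψ : DifferentiableAt ℝ ψ p.2) :
    HasFDerivAt (wkbPhase ψ lam)
      ((wkbPhase ψ lam p * (I * lam)) • ofRealCLM.comp
        ((fderiv ℝ ψ p.2).comp (.snd ℝ ℝ (Fin n → ℝ)) - lam • .fst ℝ ℝ (Fin n → ℝ))) p := by
  have hphase : HasFDerivAt (fun r : ℝ × (Fin n → ℝ) => ((ψ r.2 - lam * r.1 : ℝ) : ℂ))
      (ofRealCLM.comp ((fderiv ℝ ψ p.2).comp (.snd ℝ ℝ (Fin n → ℝ))
        - lam • .fst ℝ ℝ (Fin n → ℝ))) p :=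
    ofRealCLM.hasFDerivAt.comp p
      ((hψ.hasFDerivAt.comp p hasFDerivAt_snd).sub (hasFDerivAt_fst.const_mul lam))
  have hexp : wkbPhase ψ lam = fun r => exp (I * lam * ((ψ r.2 - lam * r.1 : ℝ) : ℂ)) := by
    ext r
    simp [wkbPhase]
  rw [hexp, mul_smul]
  exact (hphase.const_mul (I * lam)).cexp

lemma pt_wkbPhase (hψ : DifferentiableAt ℝ ψ p.2) :
    pt (wkbPhase ψ lam) p = -I * lam ^ 2 * wkbPhase ψ lam p := by
  rw [pt, (hasFDerivAt_wkbPhase hψ).fderiv]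
  simp
  ring

lemma px_wkbPhase (hψ : DifferentiableAt ℝ ψ p.2) :
    px j (wkbPhase ψ lam) p = I * lam * pxs j ψ p.2 * wkbPhase ψ lam p := by
  rw [px, (hasFDerivAt_wkbPhase hψ).fderiv]
  simp [pxs]
  ring

noncomputable def covDeriv (A : ℝ × (Fin n → ℝ) → Fin n → ℝ) (j : Fin n)
    (u : ℝ × (Fin n → ℝ) → ℂ) (r : ℝ × (Fin n → ℝ)) : ℂ :=
  px j u r + I * A r j * u r

noncomputable def transportOp (ψ : (Fin n → ℝ) → ℝ) (A : ℝ × (Fin n → ℝ) → Fin n → ℝ)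
    (u : ℝ × (Fin n → ℝ) → ℂ) (p : ℝ × (Fin n → ℝ)) : ℂ :=
  2 * I * ∑ j : Fin n, ((pxs j ψ p.2 : ℝ) : ℂ) * px j u p
    + I * ((∑ j : Fin n, pxs j (pxs j ψ) p.2 : ℝ) : ℂ) * u p
    - 2 * ((∑ j : Fin n, A p j * pxs j ψ p.2 : ℝ) : ℂ) * u p

variable {A : ℝ × (Fin n → ℝ) → Fin n → ℝ}

lemma magLap_eq_sum_covDeriv (u : ℝ × (Fin n → ℝ) → ℂ) (p : ℝ × (Fin n → ℝ)) :
    magLap A u p = ∑ j : Fin n, covDeriv A j (covDeriv A j u) p :=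
  rfl

lemma differentiable_covDeriv (hA : Differentiable ℝ A) (hu : ContDiff ℝ 2 u) :
    Differentiable ℝ (covDeriv A j u) :=
  have hAj : Differentiable ℝ (fun r => (A r j : ℂ)) :=
    ofRealCLM.differentiable.comp (differentiable_pi.mp hA j)
  ((hu.px (m := 1) (by norm_num)).differentiable one_ne_zero).add
    ((hAj.const_mul I).mul (hu.differentiable two_ne_zero))

lemma covDeriv_add_const_mul (hu : DifferentiableAt ℝ u p) (hv : DifferentiableAt ℝ v p)
    (c : ℂ) :
    covDeriv A j (fun r => u r + c * v r) p = covDeriv A j u p + c * covDeriv A j v p := by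
  rw [covDeriv, covDeriv, covDeriv, px_add_const_mul hu hv]
  ring

lemma covDeriv_mul (hu : DifferentiableAt ℝ u p) (hv : DifferentiableAt ℝ v p) :
    covDeriv A j (fun r => u r * v r) p = px j u p * v p + u p * covDeriv A j v p := by
  rw [covDeriv, covDeriv, px_mul hu hv]
  ring

lemma covDeriv_wkbPhase_mul (hψ : DifferentiableAt ℝ ψ p.2) (hv : DifferentiableAt ℝ v p) :
    covDeriv A j (fun r => wkbPhase ψ lam r * v r) p
      = wkbPhase ψ lam p * (covDeriv A j v p + I * lam * pxs j ψ p.2 * v p) := by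
  rw [covDeriv_mul ((hasFDerivAt_wkbPhase hψ).differentiableAt) hv, px_wkbPhase hψ]
  ring

lemma covDeriv_covDeriv_wkbPhase_mul (hψ : ContDiff ℝ 2 ψ) (hA : Differentiable ℝ A)
    (hv : ContDiff ℝ 2 v) :
    covDeriv A j (covDeriv A j (fun r => wkbPhase ψ lam r * v r)) p
      = wkbPhase ψ lam p * (covDeriv A j (covDeriv A j v) p
          + I * lam * (2 * pxs j ψ p.2 * covDeriv A j v p + pxs j (pxs j ψ) p.2 * v p)
          - lam ^ 2 * pxs j ψ p.2 ^ 2 * v p) := by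
  have hψ' : Differentiable ℝ ψ := hψ.differentiable two_ne_zero
  have hpxsψ : Differentiable ℝ (pxs j ψ) :=
    (hψ.pxs (m := 1) (by norm_num)).differentiable one_ne_zero
  have hv' : Differentiable ℝ v := hv.differentiable two_ne_zero
  have hcov : Differentiable ℝ (covDeriv A j v) := differentiable_covDeriv hA hv
  have hg : Differentiable ℝ (fun r : ℝ × (Fin n → ℝ) => (pxs j ψ r.2 : ℂ)) :=
    ofRealCLM.differentiable.comp (hpxsψ.comp differentiable_snd)
  have hgv : Differentiable ℝ (fun r => (pxs j ψ r.2 : ℂ) * v r) := hg.mul hv'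
  have hinner : covDeriv A j (fun r => wkbPhase ψ lam r * v r)
      = fun r => wkbPhase ψ lam r * (covDeriv A j v r + I * lam * (pxs j ψ r.2 * v r)) := by
    ext r
    rw [covDeriv_wkbPhase_mul (hψ' _) (hv' r)]
    ring
  have hw : DifferentiableAt ℝ
      (fun r => covDeriv A j v r + I * lam * (pxs j ψ r.2 * v r)) p :=
    (hcov p).add ((hgv p).const_mul _)
  rw [hinner, covDeriv_wkbPhase_mul (hψ' _) hw,
    covDeriv_add_const_mul (hcov p) (hgv p),
    covDeriv_mul (hg p) (hv' p),
    px_ofReal_comp_snd (hpxsψ _)]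
  linear_combination lam ^ 2 * pxs j ψ p.2 ^ 2 * v p * wkbPhase ψ lam p * I_sq

lemma schrodingerOp_wkbPhase_mul (hψ : ContDiff ℝ 2 ψ)
    (heik : ∀ x : Fin n → ℝ, ∑ j : Fin n, (pxs j ψ x) ^ 2 = 1) (hA : Differentiable ℝ A)
    (q : ℝ × (Fin n → ℝ) → ℂ) (hv : ContDiff ℝ 2 v) :
    schrodingerOp A q (fun r => wkbPhase ψ lam r * v r) p
      = wkbPhase ψ lam p * (schrodingerOp A q v p + lam * transportOp ψ A v p) := by
  set E := wkbPhase ψ lam p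
  have hterm (j : Fin n) : covDeriv A j (covDeriv A j (fun r => wkbPhase ψ lam r * v r)) p
      = E * covDeriv A j (covDeriv A j v) p
        + 2 * I * lam * E * (pxs j ψ p.2 * px j v p)
        + I * lam * E * v p * pxs j (pxs j ψ) p.2
        - 2 * lam * E * v p * (A p j * pxs j ψ p.2)
        - lam ^ 2 * E * v p * pxs j ψ p.2 ^ 2 := by
    rw [covDeriv_covDeriv_wkbPhase_mul hψ hA hv, show covDeriv A j v p
      = px j v p + I * A p j * v p from rfl]
    linear_combination 2 * lam * E * v p * A p j * pxs j ψ p.2 * I_sq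
  have heik' : ∑ j : Fin n, ((pxs j ψ p.2 : ℝ) : ℂ) ^ 2 = 1 := by exact_mod_cast heik p.2
  rw [schrodingerOp, schrodingerOp, magLap_eq_sum_covDeriv, magLap_eq_sum_covDeriv,
    pt_mul ((hasFDerivAt_wkbPhase (hψ.differentiable two_ne_zero _)).differentiableAt)
      (hv.differentiable two_ne_zero p),
    pt_wkbPhase (hψ.differentiable two_ne_zero _), Finset.sum_congr rfl fun j _ => hterm j]
  simp only [Finset.sum_add_distrib, Finset.sum_sub_distrib, ← Finset.mul_sum, heik',
    transportOp]
  push_cast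
  linear_combination -(lam ^ 2 * E * v p) * I_sq

lemma schrodingerOp_add_const_mul (hA : Differentiable ℝ A) (q : ℝ × (Fin n → ℝ) → ℂ)
    (hu : ContDiff ℝ 2 u) (hv : ContDiff ℝ 2 v) (c : ℂ) :
    schrodingerOp A q (fun r => u r + c * v r) p
      = schrodingerOp A q u p + c * schrodingerOp A q v p := by
  have hu' : Differentiable ℝ u := hu.differentiable two_ne_zero
  have hv' : Differentiable ℝ v := hv.differentiable two_ne_zero
  have hcov (j : Fin n) : covDeriv A j (fun r => u r + c * v r)
      = fun r => covDeriv A j u r + c * covDeriv A j v r :=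
    funext fun r => covDeriv_add_const_mul (hu' r) (hv' r) c
  simp only [schrodingerOp, magLap_eq_sum_covDeriv, hcov,
    covDeriv_add_const_mul (differentiable_covDeriv hA hu p) (differentiable_covDeriv hA hv p),
    pt_add_const_mul (hu' p) (hv' p), Finset.sum_add_distrib, ← Finset.mul_sum]
  ring

lemma transportOp_add_const_mul (hu : DifferentiableAt ℝ u p) (hv : DifferentiableAt ℝ v p)
    (c : ℂ) :
    transportOp ψ A (fun r => u r + c * v r) p
      = transportOp ψ A u p + c * transportOp ψ A v p := by
  have hsum : ∑ j : Fin n, ((pxs j ψ p.2 : ℝ) : ℂ) * px j (fun r => u r + c * v r) p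
      = ∑ j : Fin n, ((pxs j ψ p.2 : ℝ) : ℂ) * px j u p
        + c * ∑ j : Fin n, ((pxs j ψ p.2 : ℝ) : ℂ) * px j v p := by
    rw [Finset.mul_sum, ← Finset.sum_add_distrib]
    refine Finset.sum_congr rfl fun j _ => ?_
    rw [px_add_const_mul hu hv]
    ring
  rw [transportOp, transportOp, transportOp, hsum]
  ring

end WKB

theorem wkb_cancellation_general (n : ℕ)
    (a b : ℝ × (Fin n → ℝ) → ℂ) (A : ℝ × (Fin n → ℝ) → Fin n → ℝ)
    (q : ℝ × (Fin n → ℝ) → ℂ) (ψ : (Fin n → ℝ) → ℝ)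
    (hab : ContDiff ℝ 2 a) (hb : ContDiff ℝ 2 b)
    (hA : ContDiff ℝ 1 A) (hψ : ContDiff ℝ 2 ψ)
    (heik : ∀ x : Fin n → ℝ, ∑ j : Fin n, (pxs j ψ x) ^ 2 = 1)
    (htransport_a : ∀ p : ℝ × (Fin n → ℝ),
      2 * Complex.I * ∑ j : Fin n, ((pxs j ψ p.2 : ℝ) : ℂ) * px j a p
        + Complex.I * ((∑ j : Fin n, pxs j (pxs j ψ) p.2 : ℝ) : ℂ) * a p
        - 2 * ((∑ j : Fin n, A p j * pxs j ψ p.2 : ℝ) : ℂ) * a p = 0)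
    (htransport_b : ∀ p : ℝ × (Fin n → ℝ),
      2 * Complex.I * ∑ j : Fin n, ((pxs j ψ p.2 : ℝ) : ℂ) * px j b p
        + Complex.I * ((∑ j : Fin n, pxs j (pxs j ψ) p.2 : ℝ) : ℂ) * b p
        - 2 * ((∑ j : Fin n, A p j * pxs j ψ p.2 : ℝ) : ℂ) * b p
        = -(schrodingerOp A q a p)) :
    ∀ lam : ℝ, lam ≠ 0 → ∀ p : ℝ × (Fin n → ℝ),
      schrodingerOp A q
          (fun r => Complex.exp (Complex.I * (lam : ℂ)
              * ((ψ r.2 : ℂ) - (lam : ℂ) * (r.1 : ℂ))) * (a r + b r / (lam : ℂ))) p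
        = Complex.exp (Complex.I * (lam : ℂ) * ((ψ p.2 : ℂ) - (lam : ℂ) * (p.1 : ℂ)))
            * schrodingerOp A q b p / (lam : ℂ) := by
  intro lam hlam p
  have hA' : Differentiable ℝ A := hA.differentiable one_ne_zero
  have hTa : transportOp ψ A a p = 0 := htransport_a p
  have hTb : transportOp ψ A b p = -schrodingerOp A q a p := htransport_b p
  have hlam' : (lam : ℂ) ≠ 0 := Complex.ofReal_ne_zero.mpr hlam
  calc _ = schrodingerOp A q (fun r => wkbPhase ψ lam r * (a r + (lam : ℂ)⁻¹ * b r)) p := by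
        simp only [div_eq_inv_mul]
        rfl
    _ = wkbPhase ψ lam p * (schrodingerOp A q (fun r => a r + (lam : ℂ)⁻¹ * b r) p
          + lam * transportOp ψ A (fun r => a r + (lam : ℂ)⁻¹ * b r) p) :=
        schrodingerOp_wkbPhase_mul hψ heik hA' q (hab.add (contDiff_const.mul hb))
    _ = _ := by
        rw [schrodingerOp_add_const_mul hA' q hab hb, transportOp_add_const_mul
          (hab.differentiable two_ne_zero p) (hb.differentiable two_ne_zero p), hTa, hTb,
          wkbPhase]
        field_simp
        ring

/-- The WKB cancellation of Section 3 of the paper: if `ψ` solves the eikonal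
equation and `a, b` solve the transport equations, then the geometric optics ansatz
`e^{iλ(ψ−λt)}(a + b/λ)` satisfies `P(e^{iλ(ψ−λt)}(a + b/λ)) = e^{iλ(ψ−λt)} P b / λ`. -/
theorem wkb_cancellation (n : ℕ) (hn : 1 ≤ n)
    (a b : ℝ × (Fin n → ℝ) → ℂ) (A : ℝ × (Fin n → ℝ) → Fin n → ℝ)
    (q : ℝ × (Fin n → ℝ) → ℂ) (ψ : (Fin n → ℝ) → ℝ)
    (hab : ContDiff ℝ 2 a) (hb : ContDiff ℝ 2 b)
    (hA : ContDiff ℝ 1 A) (hq : Continuous q) (hψ : ContDiff ℝ 2 ψ)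
    (heik : ∀ x : Fin n → ℝ, ∑ j : Fin n, (pxs j ψ x) ^ 2 = 1)
    (htransport_a : ∀ p : ℝ × (Fin n → ℝ),
      2 * Complex.I * ∑ j : Fin n, ((pxs j ψ p.2 : ℝ) : ℂ) * px j a p
        + Complex.I * ((∑ j : Fin n, pxs j (pxs j ψ) p.2 : ℝ) : ℂ) * a p
        - 2 * ((∑ j : Fin n, A p j * pxs j ψ p.2 : ℝ) : ℂ) * a p = 0)
    (htransport_b : ∀ p : ℝ × (Fin n → ℝ),
      2 * Complex.I * ∑ j : Fin n, ((pxs j ψ p.2 : ℝ) : ℂ) * px j b p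
        + Complex.I * ((∑ j : Fin n, pxs j (pxs j ψ) p.2 : ℝ) : ℂ) * b p
        - 2 * ((∑ j : Fin n, A p j * pxs j ψ p.2 : ℝ) : ℂ) * b p
        = -(schrodingerOp A q a p)) :
    ∀ lam : ℝ, lam ≠ 0 → ∀ p : ℝ × (Fin n → ℝ),
      schrodingerOp A q
          (fun r => Complex.exp (Complex.I * (lam : ℂ)
              * ((ψ r.2 : ℂ) - (lam : ℂ) * (r.1 : ℂ))) * (a r + b r / (lam : ℂ))) p
        = Complex.exp (Complex.I * (lam : ℂ) * ((ψ p.2 : ℂ) - (lam : ℂ) * (p.1 : ℂ)))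
            * schrodingerOp A q b p / (lam : ℂ) :=
  wkb_cancellation_general n a b A q ψ hab hb hA hψ heik htransport_a htransport_b
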